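/- arXiv:2504.03465 — 4 statements merged into one kernel-verified Lean document; each statement's English description precedes it below -/
import Mathlib

section
/- (Simplified Davis–Kahan theorem.) Let A, A' be N×N Hermitian complex matrices with eigenvalues λ_0 ≤ λ_1 ≤ … ≤ λ_{N−1} and λ'_0 ≤ λ'_1 ≤ … ≤ λ'_{N−1}, and let v_0,…,v_{N−1} and v'_0,…,v'_{N−1} be unit eigenvectors with A v_j = λ_j v_j and A' v'_j = λ'_j v'_j. Fix j ∈ {0,…,N−1} and set δ_j := min{|λ_j − λ'_{j−1}|, |λ_j − λ'_{j+1}|}, where the term |λ_j − λ'_{j−1}| is omitted when j = 0 and the term |λ_j − λ'_{j+1}| is omitted when j = N−1. If δ_j > 0, then √(1 − |⟨v_j, v'_j⟩|²) ≤ (π/2)·‖A − A'‖/δ_j. -/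
/-!
Weyl's inequality `|λ i - λ' i| ≤ ‖A - A'‖` holds for every `i`: the span of `v 0, …, v i` meets
the span of `v' i, …, v' (N-1)` by a dimension count, and a unit vector there has Rayleigh
quotient at most `λ i` for `A` and at least `λ' i` for `A'`. So if `‖A - A'‖ < δ`, monotonicity
spreads the gap at the neighbours of `j` to `δ ≤ |λ' k - λ j|` for all `k ≠ j`. Expanding
`(A' - A) (v j) = (A' - λ j) (v j)` in the eigenbasis `v'` then gives
`δ² (1 - |⟨v j, v' j⟩|²) ≤ ‖A - A'‖²`, the bound without the factor `π/2`; when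
`‖A - A'‖ ≥ δ` the right-hand side is at least `1` anyway.
-/

open Matrix

/-- The spectral norm (largest singular value) of a complex matrix, i.e. the operator norm
induced by the Euclidean norm. -/
noncomputable def specNorm {N : ℕ} (M : Matrix (Fin N) (Fin N) ℂ) : ℝ :=
  ‖Matrix.toEuclideanCLM (𝕜 := ℂ) M‖

open scoped InnerProductSpace

theorem le_abs_sub_of_forall_adjacent {N : ℕ} {lam lam' : Fin N → ℝ} (hlam : Monotone lam)
    (hlam' : Monotone lam') {ε δ : ℝ} (hweyl : ∀ i, |lam i - lam' i| ≤ ε) (hεδ : ε < δ)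
    {j : Fin N} (hδ : ∀ i : Fin N, ((i : ℕ) = (j : ℕ) + 1 ∨ (i : ℕ) + 1 = (j : ℕ)) →
      δ ≤ |lam j - lam' i|) (k : Fin N) (hk : k ≠ j) : δ ≤ |lam' k - lam j| := by
  rcases hk.lt_or_gt with hkj | hjk
  · have hkj : (k : ℕ) < j := hkj
    let p : Fin N := ⟨j - 1, by omega⟩
    have hp := hδ p (Or.inr (by simp only [p]; omega))
    have hpj : lam p ≤ lam j := hlam (Fin.le_def.2 (by simp only [p]; omega))
    have hkp : lam' k ≤ lam' p := hlam' (Fin.le_def.2 (by simp only [p]; omega))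
    have hweyl_p := (abs_sub_le_iff.1 (hweyl p)).2
    have : lam' p ≤ lam j - δ := by rcases le_abs.1 hp with h | h <;> linarith
    exact le_abs.2 (Or.inr (by linarith))
  · have hjk : (j : ℕ) < k := hjk
    let s : Fin N := ⟨j + 1, by omega⟩
    have hs := hδ s (Or.inl rfl)
    have hjs : lam j ≤ lam s := hlam (Fin.le_def.2 (by simp only [s]; omega))
    have hsk : lam' s ≤ lam' k := hlam' (Fin.le_def.2 (by simp only [s]; omega))
    have hweyl_s := (abs_sub_le_iff.1 (hweyl s)).1
    have : lam j + δ ≤ lam' s := by rcases le_abs.1 hs with h | h <;> linarith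
    exact le_abs.2 (Or.inl (by linarith))

section
variable {𝕜 E : Type*} [RCLike 𝕜] [NormedAddCommGroup E] [InnerProductSpace 𝕜 E]

theorem exists_ne_zero_forall_inner_eq_zero [FiniteDimensional 𝕜 E] {κ : Type*} [Fintype κ]
    (f : κ → E) (h : Fintype.card κ < Module.finrank 𝕜 E) :
    ∃ x ≠ 0, ∀ k, ⟪f k, x⟫_𝕜 = 0 := by
  have hker : LinearMap.ker (LinearMap.pi fun k => innerₛₗ 𝕜 (f k)) ≠ ⊥ :=
    LinearMap.ker_ne_bot_of_finrank_lt (by simpa using h)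
  obtain ⟨x, hx, hx0⟩ := (Submodule.ne_bot_iff _).1 hker
  exact ⟨x, hx0, fun k => congr_fun (LinearMap.mem_ker.1 hx) k⟩

theorem ContinuousLinearMap.re_inner_apply_self_le (T : E →L[𝕜] E) (x : E) :
    RCLike.re ⟪x, T x⟫_𝕜 ≤ ‖T‖ * ‖x‖ ^ 2 :=
  calc RCLike.re ⟪x, T x⟫_𝕜 ≤ ‖x‖ * ‖T x‖ :=
        (RCLike.re_le_norm _).trans (norm_inner_le_norm _ _)
    _ ≤ ‖x‖ * (‖T‖ * ‖x‖) := by gcongr; exact T.le_opNorm x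
    _ = ‖T‖ * ‖x‖ ^ 2 := by ring

namespace OrthonormalBasis

variable {ι : Type*} [Fintype ι] (b : OrthonormalBasis ι 𝕜 E) {T : E →L[𝕜] E} {lam : ι → ℝ}

theorem inner_apply_of_apply_eq_smul {μ : ι → 𝕜} (hT : ∀ i, T (b i) = μ i • b i) (i : ι)
    (x : E) : ⟪b i, T x⟫_𝕜 = μ i * ⟪b i, x⟫_𝕜 := by
  classical
  conv_lhs => rw [← b.sum_repr' x]
  simp [hT, inner_sum, inner_smul_right, b.inner_eq_ite, mul_comm]

theorem re_inner_apply_self (hT : ∀ i, T (b i) = (lam i : 𝕜) • b i) (x : E) :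
    RCLike.re ⟪x, T x⟫_𝕜 = ∑ i, lam i * ‖⟪b i, x⟫_𝕜‖ ^ 2 := by
  rw [← b.sum_inner_mul_inner, map_sum]
  refine Finset.sum_congr rfl fun i _ => ?_
  rw [b.inner_apply_of_apply_eq_smul hT, mul_left_comm, RCLike.re_ofReal_mul, ← inner_conj_symm,
    RCLike.conj_mul]
  norm_cast

theorem sq_mul_sub_sq_norm_inner_le_norm_apply_sub_smul_sq
    (hT : ∀ i, T (b i) = (lam i : 𝕜) • b i) {u : E} {μ δ : ℝ} {j : ι}
    (hgap : ∀ k ≠ j, δ ≤ |lam k - μ|) (hδ : 0 ≤ δ) :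
    δ ^ 2 * (‖u‖ ^ 2 - ‖⟪b j, u⟫_𝕜‖ ^ 2) ≤ ‖T u - (μ : 𝕜) • u‖ ^ 2 := by
  classical
  have hcoeff : ∀ k, ‖⟪b k, T u - (μ : 𝕜) • u⟫_𝕜‖ = |lam k - μ| * ‖⟪b k, u⟫_𝕜‖ := fun k => by
    rw [inner_sub_right, inner_smul_right, b.inner_apply_of_apply_eq_smul hT, ← sub_mul,
      norm_mul, ← RCLike.ofReal_sub, RCLike.norm_ofReal]
  calc δ ^ 2 * (‖u‖ ^ 2 - ‖⟪b j, u⟫_𝕜‖ ^ 2)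
      = ∑ k ∈ Finset.univ.erase j, δ ^ 2 * ‖⟪b k, u⟫_𝕜‖ ^ 2 := by
        rw [← b.sum_sq_norm_inner_right, ← Finset.sum_erase_eq_sub (Finset.mem_univ j),
          Finset.mul_sum]
    _ ≤ ∑ k ∈ Finset.univ.erase j, ‖⟪b k, T u - (μ : 𝕜) • u⟫_𝕜‖ ^ 2 := by
        refine Finset.sum_le_sum fun k hk => ?_
        rw [hcoeff, mul_pow]
        gcongr
        exact hgap k (Finset.ne_of_mem_erase hk)
    _ ≤ ‖T u - (μ : 𝕜) • u‖ ^ 2 := by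
        rw [← b.sum_sq_norm_inner_right]
        exact Finset.sum_le_sum_of_subset_of_nonneg (Finset.subset_univ _)
          fun _ _ _ => by positivity

variable [LinearOrder ι]

theorem re_inner_apply_self_le_of_inner_eq_zero (hlam : Monotone lam)
    (hT : ∀ i, T (b i) = (lam i : 𝕜) • b i) {x : E} {i : ι}
    (hx : ∀ k, i < k → ⟪b k, x⟫_𝕜 = 0) : RCLike.re ⟪x, T x⟫_𝕜 ≤ lam i * ‖x‖ ^ 2 := by
  rw [b.re_inner_apply_self hT, ← b.sum_sq_norm_inner_right, Finset.mul_sum]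
  refine Finset.sum_le_sum fun k _ => ?_
  rcases le_or_gt k i with hki | hik
  · exact mul_le_mul_of_nonneg_right (hlam hki) (sq_nonneg _)
  · simp [hx k hik]

theorem le_re_inner_apply_self_of_inner_eq_zero (hlam : Monotone lam)
    (hT : ∀ i, T (b i) = (lam i : 𝕜) • b i) {x : E} {i : ι}
    (hx : ∀ k < i, ⟪b k, x⟫_𝕜 = 0) : lam i * ‖x‖ ^ 2 ≤ RCLike.re ⟪x, T x⟫_𝕜 := by
  rw [b.re_inner_apply_self hT, ← b.sum_sq_norm_inner_right, Finset.mul_sum]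
  refine Finset.sum_le_sum fun k _ => ?_
  rcases lt_or_ge k i with hki | hik
  · simp [hx k hki]
  · exact mul_le_mul_of_nonneg_right (hlam hik) (sq_nonneg _)

theorem eigenvalue_le_eigenvalue_add_norm_sub {b' : OrthonormalBasis ι 𝕜 E} {T' : E →L[𝕜] E}
    {lam' : ι → ℝ} (hlam : Monotone lam) (hlam' : Monotone lam')
    (hT : ∀ i, T (b i) = (lam i : 𝕜) • b i) (hT' : ∀ i, T' (b' i) = (lam' i : 𝕜) • b' i)
    (i : ι) : lam' i ≤ lam i + ‖T' - T‖ := by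
  have : FiniteDimensional 𝕜 E := b.toBasis.finiteDimensional_of_finite
  obtain ⟨x, hx0, hx⟩ := exists_ne_zero_forall_inner_eq_zero (𝕜 := 𝕜)
    (fun k : {k // k ≠ i} => if i < k.1 then b k else b' k) <| by
      rw [Fintype.card_subtype_compl, Fintype.card_subtype_eq,
        Module.finrank_eq_card_basis b.toBasis]
      have : 0 < Fintype.card ι := Fintype.card_pos_iff.2 ⟨i⟩
      omega
  have hxb : ∀ k, i < k → ⟪b k, x⟫_𝕜 = 0 := fun k hik => by
    simpa [hik] using hx ⟨k, hik.ne'⟩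
  have hxb' : ∀ k < i, ⟪b' k, x⟫_𝕜 = 0 := fun k hki => by
    simpa [hki.not_gt] using hx ⟨k, hki.ne⟩
  have hpos : 0 < ‖x‖ ^ 2 := by positivity
  have key : lam' i * ‖x‖ ^ 2 ≤ (lam i + ‖T' - T‖) * ‖x‖ ^ 2 :=
    calc lam' i * ‖x‖ ^ 2 ≤ RCLike.re ⟪x, T' x⟫_𝕜 :=
          b'.le_re_inner_apply_self_of_inner_eq_zero hlam' hT' hxb'
      _ = RCLike.re ⟪x, T x⟫_𝕜 + RCLike.re ⟪x, (T' - T) x⟫_𝕜 := by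
          simp [inner_sub_right]
      _ ≤ lam i * ‖x‖ ^ 2 + ‖T' - T‖ * ‖x‖ ^ 2 :=
          add_le_add (b.re_inner_apply_self_le_of_inner_eq_zero hlam hT hxb)
            ((T' - T).re_inner_apply_self_le x)
      _ = (lam i + ‖T' - T‖) * ‖x‖ ^ 2 := by ring
  exact le_of_mul_le_mul_right key hpos

theorem sqrt_one_sub_sq_norm_inner_le_norm_sub_div {N : ℕ}
    {b b' : OrthonormalBasis (Fin N) 𝕜 E} {T T' : E →L[𝕜] E} {lam lam' : Fin N → ℝ}
    (hlam : Monotone lam) (hlam' : Monotone lam')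
    (hT : ∀ i, T (b i) = (lam i : 𝕜) • b i) (hT' : ∀ i, T' (b' i) = (lam' i : 𝕜) • b' i)
    (j : Fin N) {δ : ℝ} (hδpos : 0 < δ)
    (hδ : ∀ i : Fin N, ((i : ℕ) = (j : ℕ) + 1 ∨ (i : ℕ) + 1 = (j : ℕ)) → δ ≤ |lam j - lam' i|) :
    √(1 - ‖⟪b j, b' j⟫_𝕜‖ ^ 2) ≤ ‖T - T'‖ / δ := by
  rcases le_or_gt δ ‖T - T'‖ with hge | hlt
  · exact (Real.sqrt_le_one.2 (by linarith [sq_nonneg ‖⟪b j, b' j⟫_𝕜‖])).trans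
      ((one_le_div hδpos).2 hge)
  have hweyl : ∀ i, |lam i - lam' i| ≤ ‖T - T'‖ := fun i => abs_sub_le_iff.2
    ⟨by linarith [b'.eigenvalue_le_eigenvalue_add_norm_sub hlam' hlam hT' hT i],
      by linarith [norm_sub_rev T' T, b.eigenvalue_le_eigenvalue_add_norm_sub hlam hlam' hT hT' i]⟩
  have hres := b'.sq_mul_sub_sq_norm_inner_le_norm_apply_sub_smul_sq hT' (u := b j)
    (le_abs_sub_of_forall_adjacent hlam hlam' hweyl hlt hδ) hδpos.le
  have hresidual : ‖T' (b j) - (lam j : 𝕜) • b j‖ ≤ ‖T - T'‖ := by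
    rw [← hT, ← _root_.sub_apply, norm_sub_rev T]
    simpa using (T' - T).le_opNorm (b j)
  rw [b.norm_eq_one, one_pow, norm_inner_symm] at hres
  rw [Real.sqrt_le_left (by positivity), div_pow, le_div_iff₀ (by positivity)]
  nlinarith [norm_nonneg (T' (b j) - (lam j : 𝕜) • b j)]

end OrthonormalBasis
end

section
variable {𝕜 n : Type*} [RCLike 𝕜] [Fintype n] [DecidableEq n] {v : n → n → 𝕜}

theorem orthonormal_toLp_of_dotProduct
    (hv : ∀ j k, star (v j) ⬝ᵥ v k = if j = k then 1 else 0) :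
    Orthonormal 𝕜 fun k => WithLp.toLp 2 (v k) := by
  rw [orthonormal_iff_ite]
  intro i j
  rw [EuclideanSpace.inner_toLp_toLp, dotProduct_comm, hv]

noncomputable def orthonormalBasisOfDotProduct (v : n → n → 𝕜)
    (hv : ∀ j k, star (v j) ⬝ᵥ v k = if j = k then 1 else 0) :
    OrthonormalBasis n 𝕜 (EuclideanSpace 𝕜 n) :=
  OrthonormalBasis.mk (orthonormal_toLp_of_dotProduct hv)
    ((orthonormal_toLp_of_dotProduct hv).linearIndependent.span_eq_top_of_card_eq_finrank'
      (by simp)).ge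

@[simp]
theorem coe_orthonormalBasisOfDotProduct
    (hv : ∀ j k, star (v j) ⬝ᵥ v k = if j = k then 1 else 0) :
    ⇑(orthonormalBasisOfDotProduct v hv) = fun k => WithLp.toLp 2 (v k) :=
  OrthonormalBasis.coe_mk _ _

end

theorem davis_kahan_general {N : ℕ} (A A' : Matrix (Fin N) (Fin N) ℂ)
    (lam lam' : Fin N → ℝ) (hmono : Monotone lam) (hmono' : Monotone lam')
    (v v' : Fin N → (Fin N → ℂ))
    (hv : ∀ j k, star (v j) ⬝ᵥ v k = if j = k then 1 else 0)
    (hv' : ∀ j k, star (v' j) ⬝ᵥ v' k = if j = k then 1 else 0)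
    (heig : ∀ j, A.mulVec (v j) = (lam j : ℂ) • v j)
    (heig' : ∀ j, A'.mulVec (v' j) = (lam' j : ℂ) • v' j)
    (j : Fin N) (δj : ℝ) (hδpos : 0 < δj)
    (hδ : ∀ i : Fin N, ((i : ℕ) = (j : ℕ) + 1 ∨ (i : ℕ) + 1 = (j : ℕ)) →
      δj ≤ |lam j - lam' i|) :
    Real.sqrt (1 - ‖star (v j) ⬝ᵥ v' j‖ ^ 2) ≤
      Real.pi / 2 * specNorm (A - A') / δj := by
  let b := orthonormalBasisOfDotProduct v hv
  let b' := orthonormalBasisOfDotProduct v' hv'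
  have hinner : ⟪b j, b' j⟫_ℂ = star (v j) ⬝ᵥ v' j := by
    simp [b, b', EuclideanSpace.inner_toLp_toLp, dotProduct_comm]
  have hsin : √(1 - ‖star (v j) ⬝ᵥ v' j‖ ^ 2) ≤ specNorm (A - A') / δj := by
    rw [← hinner, specNorm, map_sub]
    exact OrthonormalBasis.sqrt_one_sub_sq_norm_inner_le_norm_sub_div hmono hmono'
      (by simp [b, heig]) (by simp [b', heig']) j hδpos hδ
  calc √(1 - ‖star (v j) ⬝ᵥ v' j‖ ^ 2) ≤ specNorm (A - A') / δj := hsin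
    _ ≤ Real.pi / 2 * specNorm (A - A') / δj := by
      rw [mul_div_assoc]
      exact le_mul_of_one_le_left (by unfold specNorm; positivity) Real.one_le_pi_div_two

/-- **Simplified Davis–Kahan theorem.**  Let `A, A'` be Hermitian `N × N` matrices with
eigenvalues `lam, lam'` listed in nondecreasing order (with multiplicity, as witnessed by
orthonormal eigenbases `v, v'`).  Fix `j` and let `δj > 0` be a lower bound for
`min {|lam j - lam' (j-1)|, |lam j - lam' (j+1)|}` (each term being omitted at the
respective boundary).  Then `√(1 - |⟨v j, v' j⟩|²) ≤ (π/2) ‖A - A'‖ / δj`. -/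
theorem davis_kahan {N : ℕ} (A A' : Matrix (Fin N) (Fin N) ℂ)
    (hA : A.IsHermitian) (hA' : A'.IsHermitian)
    (lam lam' : Fin N → ℝ) (hmono : Monotone lam) (hmono' : Monotone lam')
    (v v' : Fin N → (Fin N → ℂ))
    (hv : ∀ j k, star (v j) ⬝ᵥ v k = if j = k then 1 else 0)
    (hv' : ∀ j k, star (v' j) ⬝ᵥ v' k = if j = k then 1 else 0)
    (heig : ∀ j, A.mulVec (v j) = (lam j : ℂ) • v j)
    (heig' : ∀ j, A'.mulVec (v' j) = (lam' j : ℂ) • v' j)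
    (j : Fin N) (δj : ℝ) (hδpos : 0 < δj)
    (hδ : ∀ i : Fin N, ((i : ℕ) = (j : ℕ) + 1 ∨ (i : ℕ) + 1 = (j : ℕ)) →
      δj ≤ |lam j - lam' i|) :
    Real.sqrt (1 - ‖star (v j) ⬝ᵥ v' j‖ ^ 2) ≤
      Real.pi / 2 * specNorm (A - A') / δj :=
  davis_kahan_general A A' lam lam' hmono hmono' v v' hv hv' heig heig' j δj hδpos hδ
end

section
/- (Weyl's inequality.) Let A, A' be N×N Hermitian complex matrices with eigenvalues λ_0 ≤ λ_1 ≤ … ≤ λ_{N−1} and λ'_0 ≤ λ'_1 ≤ … ≤ λ'_{N−1} listed in nondecreasing order (with multiplicity). Then for every j ∈ {0,…,N−1}, |λ_j − λ'_j| ≤ ‖A − A'‖. -/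
/-!
The span of the eigenvectors of `A` with index `≥ j` and the span of those of `A'` with index
`≤ j` have dimensions `N - j` and `j + 1`, so they share a nonzero vector `y`. The Rayleigh
quotient of `A` at `y` is at least `λ_j` and that of `A'` is at most `λ'_j`; their difference is
the Rayleigh quotient of `A - A'`, which is bounded by `‖A - A'‖`. Exchanging `A` and `A'` gives
the other half of the inequality.
-/

open Matrix Finset Submodule

theorem finrank_span_image_finset_eq_card {K V ι : Type*} [DivisionRing K] [AddCommGroup V]
    [Module K V] {b : ι → V} (hb : LinearIndependent K b) (s : Finset ι) :
    Module.finrank K (span K (b '' s)) = #s := by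
  rw [Set.image_eq_range]
  exact (finrank_span_eq_card (hb.comp _ Subtype.val_injective)).trans (by simp)

theorem exists_ne_zero_mem_span_Ici_mem_span_Iic {K V : Type*} [DivisionRing K]
    [AddCommGroup V] [Module K V] [FiniteDimensional K V] {N : ℕ}
    (hV : Module.finrank K V = N) {b b' : Fin N → V}
    (hb : LinearIndependent K b) (hb' : LinearIndependent K b') (j : Fin N) :
    ∃ y ≠ 0, y ∈ span K (b '' Ici j) ∧ y ∈ span K (b' '' Iic j) := by
  by_contra! h
  have hdisj : Disjoint (span K (b '' Ici j)) (span K (b' '' Iic j)) :=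
    disjoint_def.2 fun y hy hy' => by_contra fun hy0 => h y hy0 hy hy'
  have hdim := finrank_add_finrank_le_of_disjoint hdisj
  rw [finrank_span_image_finset_eq_card hb, finrank_span_image_finset_eq_card hb',
    Fin.card_Ici, Fin.card_Iic, hV] at hdim
  omega

section Rayleigh

variable {𝕜 E ι : Type*} [RCLike 𝕜] [NormedAddCommGroup E] [InnerProductSpace 𝕜 E]
  {T : E →L[𝕜] E} {b : ι → E} {μ : ι → ℝ}

theorem ContinuousLinearMap.reApplyInnerSelf_sum_smul_of_eigen (hb : Orthonormal 𝕜 b)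
    (hT : ∀ k, T (b k) = (μ k : 𝕜) • b k) (s : Finset ι) (l : ι → 𝕜) :
    T.reApplyInnerSelf (∑ k ∈ s, l k • b k) = ∑ k ∈ s, ‖l k‖ ^ 2 * μ k := by
  have hTy : T (∑ k ∈ s, l k • b k) = ∑ k ∈ s, (l k * μ k) • b k := by
    simp only [map_sum, map_smul, hT, smul_smul]
  rw [T.reApplyInnerSelf_apply, hTy, hb.inner_sum, map_sum]
  refine sum_congr rfl fun k _ => ?_
  rw [map_mul (starRingEnd 𝕜), RCLike.conj_ofReal, mul_right_comm, RCLike.conj_mul]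
  norm_cast

theorem Orthonormal.norm_sum_smul_sq (hb : Orthonormal 𝕜 b) (s : Finset ι) (l : ι → 𝕜) :
    ‖∑ k ∈ s, l k • b k‖ ^ 2 = ∑ k ∈ s, ‖l k‖ ^ 2 := by
  rw [@norm_sq_eq_re_inner 𝕜, hb.inner_sum, map_sum]
  simp only [RCLike.conj_mul]
  norm_cast

theorem ContinuousLinearMap.le_rayleighQuotient_of_mem_span (hb : Orthonormal 𝕜 b)
    (hT : ∀ k, T (b k) = (μ k : 𝕜) • b k) {s : Finset ι} {c : ℝ} (hc : ∀ k ∈ s, c ≤ μ k)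
    {y : E} (hy : y ∈ span 𝕜 (b '' s)) (hy0 : y ≠ 0) :
    c ≤ T.rayleighQuotient y := by
  obtain ⟨l, rfl⟩ := (mem_span_image_finset_iff_exists_fun' 𝕜).mp hy
  rw [rayleighQuotient, le_div_iff₀ (by positivity), hb.norm_sum_smul_sq,
    T.reApplyInnerSelf_sum_smul_of_eigen hb hT, mul_sum]
  exact sum_le_sum fun k hk => by rw [mul_comm]; gcongr; exact hc k hk

theorem ContinuousLinearMap.rayleighQuotient_le_of_mem_span (hb : Orthonormal 𝕜 b)
    (hT : ∀ k, T (b k) = (μ k : 𝕜) • b k) {s : Finset ι} {c : ℝ} (hc : ∀ k ∈ s, μ k ≤ c)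
    {y : E} (hy : y ∈ span 𝕜 (b '' s)) (hy0 : y ≠ 0) :
    T.rayleighQuotient y ≤ c := by
  obtain ⟨l, rfl⟩ := (mem_span_image_finset_iff_exists_fun' 𝕜).mp hy
  rw [rayleighQuotient, div_le_iff₀ (by positivity), hb.norm_sum_smul_sq,
    T.reApplyInnerSelf_sum_smul_of_eigen hb hT, mul_sum]
  exact sum_le_sum fun k hk => by rw [mul_comm c]; gcongr; exact hc k hk

end Rayleigh

theorem ContinuousLinearMap.sub_le_norm_sub_of_orthonormal_eigenvectors {𝕜 E : Type*} [RCLike 𝕜]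
    [NormedAddCommGroup E] [InnerProductSpace 𝕜 E] [FiniteDimensional 𝕜 E] {N : ℕ}
    (hE : Module.finrank 𝕜 E = N) {T T' : E →L[𝕜] E} {b b' : Fin N → E} {μ μ' : Fin N → ℝ}
    (hb : Orthonormal 𝕜 b) (hb' : Orthonormal 𝕜 b')
    (hT : ∀ k, T (b k) = (μ k : 𝕜) • b k) (hT' : ∀ k, T' (b' k) = (μ' k : 𝕜) • b' k)
    (hμ : Monotone μ) (hμ' : Monotone μ') (j : Fin N) :
    μ j - μ' j ≤ ‖T - T'‖ := by
  obtain ⟨y, hy0, hy, hy'⟩ :=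
    exists_ne_zero_mem_span_Ici_mem_span_Iic hE hb.linearIndependent hb'.linearIndependent j
  have hlow := T.le_rayleighQuotient_of_mem_span hb hT (fun k hk => hμ (mem_Ici.1 hk)) hy hy0
  have hup := T'.rayleighQuotient_le_of_mem_span hb' hT' (fun k hk => hμ' (mem_Iic.1 hk)) hy' hy0
  have hdiff : (T - T').rayleighQuotient y = T.rayleighQuotient y - T'.rayleighQuotient y := by
    rw [sub_eq_add_neg, rayleighQuotient_add, rayleighQuotient_neg_apply, sub_eq_add_neg]
  have hnorm := (le_abs_self _).trans ((T - T').rayleighQuotient_le_norm y)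
  linarith

theorem Matrix.orthonormal_toLp_of_star_dotProduct {𝕜 n ι : Type*} [RCLike 𝕜] [Fintype n]
    [DecidableEq ι] {v : ι → n → 𝕜} (hv : ∀ j k, star (v j) ⬝ᵥ v k = if j = k then 1 else 0) :
    Orthonormal 𝕜 (fun k => WithLp.toLp 2 (v k)) := by
  refine orthonormal_iff_ite.2 fun j k => ?_
  rw [EuclideanSpace.inner_toLp_toLp, dotProduct_comm, hv]

theorem Matrix.toEuclideanCLM_toLp_of_mulVec_eq_smul {𝕜 n : Type*} [RCLike 𝕜] [Fintype n]
    [DecidableEq n] {A : Matrix n n 𝕜} {x : n → 𝕜} {c : 𝕜} (h : A *ᵥ x = c • x) :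
    toEuclideanCLM (𝕜 := 𝕜) A (WithLp.toLp 2 x) = c • WithLp.toLp 2 x := by
  rw [toEuclideanCLM_toLp, h, WithLp.toLp_smul]

theorem weyl_inequality_general {N : ℕ} (A A' : Matrix (Fin N) (Fin N) ℂ)
    (lam lam' : Fin N → ℝ) (hmono : Monotone lam) (hmono' : Monotone lam')
    (v v' : Fin N → (Fin N → ℂ))
    (hv : ∀ j k, star (v j) ⬝ᵥ v k = if j = k then 1 else 0)
    (hv' : ∀ j k, star (v' j) ⬝ᵥ v' k = if j = k then 1 else 0)
    (heig : ∀ j, A.mulVec (v j) = (lam j : ℂ) • v j)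
    (heig' : ∀ j, A'.mulVec (v' j) = (lam' j : ℂ) • v' j)
    (j : Fin N) :
    |lam j - lam' j| ≤ specNorm (A - A') := by
  have hb := orthonormal_toLp_of_star_dotProduct hv
  have hb' := orthonormal_toLp_of_star_dotProduct hv'
  have hT k := toEuclideanCLM_toLp_of_mulVec_eq_smul (heig k)
  have hT' k := toEuclideanCLM_toLp_of_mulVec_eq_smul (heig' k)
  have hle := ContinuousLinearMap.sub_le_norm_sub_of_orthonormal_eigenvectors
    (E := EuclideanSpace ℂ (Fin N)) finrank_euclideanSpace_fin hb hb' hT hT' hmono hmono' j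
  have hge := ContinuousLinearMap.sub_le_norm_sub_of_orthonormal_eigenvectors
    (E := EuclideanSpace ℂ (Fin N)) finrank_euclideanSpace_fin hb' hb hT' hT hmono' hmono j
  rw [norm_sub_rev] at hge
  rw [specNorm, map_sub, abs_sub_le_iff]
  exact ⟨hle, hge⟩

/-- **Weyl's inequality.**  If `A, A'` are Hermitian `N × N` matrices whose eigenvalues,
listed in nondecreasing order with multiplicity (as witnessed by monotone listings together
with orthonormal eigenbases), are `lam` and `lam'`, then `|lam j - lam' j| ≤ ‖A - A'‖` for
every `j`. -/
theorem weyl_inequality {N : ℕ} (A A' : Matrix (Fin N) (Fin N) ℂ)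
    (hA : A.IsHermitian) (hA' : A'.IsHermitian)
    (lam lam' : Fin N → ℝ) (hmono : Monotone lam) (hmono' : Monotone lam')
    (v v' : Fin N → (Fin N → ℂ))
    (hv : ∀ j k, star (v j) ⬝ᵥ v k = if j = k then 1 else 0)
    (hv' : ∀ j k, star (v' j) ⬝ᵥ v' k = if j = k then 1 else 0)
    (heig : ∀ j, A.mulVec (v j) = (lam j : ℂ) • v j)
    (heig' : ∀ j, A'.mulVec (v' j) = (lam' j : ℂ) • v' j)
    (j : Fin N) :
    |lam j - lam' j| ≤ specNorm (A - A') :=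
  weyl_inequality_general A A' lam lam' hmono hmono' v v' hv hv' heig heig' j
end

section
/- (Error bound on the effective Hamiltonian.) Let H be an N×N Hermitian complex matrix and let U := e^{−iHt} with 0 < t ≤ 1/(4‖H‖). Let Ũ be a unitary N×N matrix such that ‖Ũ − U‖ ≤ tε/9 and tε/9 ≤ 1/3 for some ε ≥ 0. Define the matrix logarithm by the convergent series log Ũ := ∑_{k=1}^∞ ((−1)^{k+1}/k)·(Ũ − 𝟙)^k and the effective Hamiltonian H̃ := (i/t)·log Ũ. Then ‖H̃ − H‖ ≤ ε. -/
/-!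
Diagonalise `H = u D u⋆` with `u` unitary. Both defining series commute with conjugation by `u`
and act entrywise on diagonal matrices, and `log (exp z) = z` for `|z| < 1/2`; hence
`log (e^{-iHt}) = -iHt` exactly when `t ‖H‖ ≤ 1/4`. The logarithm series is `3`-Lipschitz on the
ball `‖U - 1‖ ≤ 2/3`, which contains `e^{-iHt}` (as `e^{1/4} - 1 < 1/3`) and therefore also `Ũ`.
So `‖H̃ - H‖ = ‖log Ũ - log e^{-iHt}‖ / t ≤ 3 ‖Ũ - e^{-iHt}‖ / t ≤ ε / 3`.
-/

open Matrix

/-- The matrix exponential `e^M = ∑_{k ≥ 0} M^k / k!`. -/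
noncomputable def mexp {N : ℕ} (M : Matrix (Fin N) (Fin N) ℂ) : Matrix (Fin N) (Fin N) ℂ :=
  ∑' k : ℕ, ((k.factorial : ℂ))⁻¹ • M ^ k

/-- The matrix logarithm `log U = ∑_{k ≥ 1} ((-1)^{k+1} / k) (U - 𝟙)^k`
(here reindexed by `k ↦ k + 1`). -/
noncomputable def mlog {N : ℕ} (U : Matrix (Fin N) (Fin N) ℂ) : Matrix (Fin N) (Fin N) ℂ :=
  ∑' k : ℕ, ((-1 : ℂ) ^ k / ((k : ℂ) + 1)) • (U - 1) ^ (k + 1)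

open scoped Matrix.Norms.L2Operator
open NormedSpace

theorem norm_pow_succ_sub_pow_succ_le {R : Type*} [SeminormedRing R] {x y : R} {r : ℝ}
    (hx : ‖x‖ ≤ r) (hy : ‖y‖ ≤ r) (n : ℕ) :
    ‖x ^ (n + 1) - y ^ (n + 1)‖ ≤ (n + 1) * r ^ n * ‖x - y‖ := by
  induction n with
  | zero => simp
  | succ n ih =>
    have hr : 0 ≤ r := (norm_nonneg x).trans hx
    have hxn : ‖x ^ (n + 1)‖ ≤ r ^ (n + 1) :=
      (norm_pow_le' x n.succ_pos).trans (pow_le_pow_left₀ (norm_nonneg x) hx _)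
    calc ‖x ^ (n + 2) - y ^ (n + 2)‖
        = ‖x ^ (n + 1) * (x - y) + (x ^ (n + 1) - y ^ (n + 1)) * y‖ := by congr 1; noncomm_ring
      _ ≤ ‖x ^ (n + 1)‖ * ‖x - y‖ + ‖x ^ (n + 1) - y ^ (n + 1)‖ * ‖y‖ :=
        (norm_add_le _ _).trans (add_le_add (norm_mul_le _ _) (norm_mul_le _ _))
      _ ≤ r ^ (n + 1) * ‖x - y‖ + (n + 1) * r ^ n * ‖x - y‖ * r := by gcongr
      _ = (↑(n + 1) + 1) * r ^ (n + 1) * ‖x - y‖ := by push_cast; ring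

namespace Complex

theorem norm_neg_one_pow_div_succ (k : ℕ) : ‖(-1 : ℂ) ^ k / (k + 1)‖ = 1 / (k + 1) := by
  rw [norm_div, norm_pow, norm_neg, norm_one, one_pow, ← Nat.cast_succ, norm_natCast,
    Nat.cast_succ]

theorem hasSum_log_one_add {z : ℂ} (hz : ‖z‖ < 1) :
    HasSum (fun k : ℕ => (-1 : ℂ) ^ k / (k + 1) * z ^ (k + 1)) (log (1 + z)) := by
  have h := (hasSum_nat_add_iff' 1).mpr (hasSum_taylorSeries_log hz)
  simp only [Finset.range_one, Finset.sum_singleton, Nat.cast_zero, div_zero, sub_zero] at h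
  convert h using 2 with k
  · rfl
  · push_cast
    ring

theorem log_exp_of_norm_lt_pi {w : ℂ} (hw : ‖w‖ < Real.pi) : log (exp w) = w := by
  have him : |w.im| < Real.pi := (abs_im_le_norm w).trans_lt hw
  exact log_exp (by linarith [(abs_lt.mp him).1]) (abs_lt.mp him).2.le

end Complex

section LogSeries

variable {A : Type*} [NormedRing A] [NormedSpace ℂ A]

noncomputable def logSeries (x : A) : A :=
  ∑' k : ℕ, ((-1 : ℂ) ^ k / ((k : ℂ) + 1)) • x ^ (k + 1)

theorem norm_logSeries_term_le {x : A} {r : ℝ} (hx : ‖x‖ ≤ r) (k : ℕ) :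
    ‖((-1 : ℂ) ^ k / ((k : ℂ) + 1)) • x ^ (k + 1)‖ ≤ r ^ (k + 1) := by
  rw [norm_smul, Complex.norm_neg_one_pow_div_succ]
  have hxk : ‖x ^ (k + 1)‖ ≤ r ^ (k + 1) :=
    (norm_pow_le' x k.succ_pos).trans (pow_le_pow_left₀ (norm_nonneg x) hx _)
  calc 1 / ((k : ℝ) + 1) * ‖x ^ (k + 1)‖ ≤ 1 * r ^ (k + 1) := by
        gcongr
        exact div_le_one_of_le₀ (by linarith [k.cast_nonneg (α := ℝ)]) (by positivity)
    _ = r ^ (k + 1) := one_mul _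

theorem summable_logSeries [CompleteSpace A] {x : A} (hx : ‖x‖ < 1) :
    Summable fun k : ℕ => ((-1 : ℂ) ^ k / ((k : ℂ) + 1)) • x ^ (k + 1) :=
  .of_norm_bounded ((summable_geometric_of_lt_one (norm_nonneg x) hx).mul_left ‖x‖)
    fun k => (norm_logSeries_term_le le_rfl k).trans_eq (pow_succ' _ _)

/-- Termwise `‖x^{k+1} - y^{k+1}‖ / (k + 1) ≤ r^k ‖x - y‖`; sum the geometric series. -/
theorem norm_logSeries_sub_logSeries_le [CompleteSpace A] {x y : A} {r : ℝ}
    (hx : ‖x‖ ≤ r) (hy : ‖y‖ ≤ r) (hr : r < 1) :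
    ‖logSeries x - logSeries y‖ ≤ ‖x - y‖ / (1 - r) := by
  have hr0 : 0 ≤ r := (norm_nonneg x).trans hx
  rw [logSeries, logSeries, ← (summable_logSeries (hx.trans_lt hr)).tsum_sub
    (summable_logSeries (hy.trans_lt hr)), div_eq_mul_inv]
  refine tsum_of_norm_bounded ((hasSum_geometric_of_lt_one hr0 hr).mul_left ‖x - y‖) fun k => ?_
  rw [← smul_sub, norm_smul, Complex.norm_neg_one_pow_div_succ]
  calc 1 / ((k : ℝ) + 1) * ‖x ^ (k + 1) - y ^ (k + 1)‖
      ≤ 1 / ((k : ℝ) + 1) * ((k + 1) * r ^ k * ‖x - y‖) := by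
        gcongr
        exact norm_pow_succ_sub_pow_succ_le hx hy k
    _ = ‖x - y‖ * r ^ k := by field_simp

end LogSeries

theorem norm_exp_sub_one_le {A : Type*} [NormedRing A] [NormedAlgebra ℂ A] [CompleteSpace A]
    (x : A) : ‖exp x - 1‖ ≤ Real.exp ‖x‖ - 1 := by
  have hA := (hasSum_nat_add_iff' 1).mpr (exp_series_hasSum_exp' (𝕂 := ℂ) x)
  have hR := (hasSum_nat_add_iff' 1).mpr (exp_series_hasSum_exp' (𝕂 := ℝ) ‖x‖)
  simp only [Finset.range_one, Finset.sum_singleton, pow_zero, Nat.factorial_zero, Nat.cast_one,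
    inv_one, one_smul] at hA hR
  rw [← Real.exp_eq_exp_ℝ] at hR
  refine hA.norm_le_of_bounded hR fun k => ?_
  rw [norm_smul, norm_inv, Complex.norm_natCast, smul_eq_mul]
  gcongr
  exact norm_pow_le' x k.succ_pos

section Matrix

variable {N : ℕ}

theorem specNorm_eq_norm (M : Matrix (Fin N) (Fin N) ℂ) : specNorm M = ‖M‖ := rfl

theorem mexp_eq_exp (M : Matrix (Fin N) (Fin N) ℂ) : mexp M = exp M := by
  rw [exp_eq_tsum ℂ]
  rfl

theorem mlog_eq_logSeries (U : Matrix (Fin N) (Fin N) ℂ) : mlog U = logSeries (U - 1) := rfl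

theorem norm_mlog_sub_mlog_le {U V : Matrix (Fin N) (Fin N) ℂ} {r : ℝ} (hU : ‖U - 1‖ ≤ r)
    (hV : ‖V - 1‖ ≤ r) (hr : r < 1) : ‖mlog U - mlog V‖ ≤ ‖U - V‖ / (1 - r) := by
  simpa only [mlog_eq_logSeries, sub_sub_sub_cancel_right] using
    norm_logSeries_sub_logSeries_le hU hV hr

theorem map_mlog (φ : Matrix (Fin N) (Fin N) ℂ ≃ₐ[ℂ] Matrix (Fin N) (Fin N) ℂ)
    (U : Matrix (Fin N) (Fin N) ℂ) : φ (mlog U) = mlog (φ U) := by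
  simpa [mlog] using φ.toLinearEquiv.toContinuousLinearEquiv.map_tsum
    (f := fun k : ℕ => ((-1 : ℂ) ^ k / ((k : ℂ) + 1)) • (U - 1) ^ (k + 1))

theorem mlog_diagonal {d : Fin N → ℂ} (hd : ∀ i, ‖d i - 1‖ < 1) :
    mlog (diagonal d) = diagonal fun i => Complex.log (d i) := by
  have hlog : ∀ i, HasSum (fun k : ℕ => (-1 : ℂ) ^ k / (k + 1) * (d i - 1) ^ (k + 1))
      (Complex.log (d i)) := fun i => by
    simpa using Complex.hasSum_log_one_add (hd i)
  refine HasSum.tsum_eq ?_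
  convert (Pi.hasSum.mpr hlog).matrix_diagonal using 1
  ext1 k
  rw [← diagonal_one, diagonal_sub, diagonal_pow, ← diagonal_smul]
  rfl

theorem mlog_mexp_diagonal {w : Fin N → ℂ} (hw : ∀ i, ‖w i‖ < 1 / 2) :
    mlog (mexp (diagonal w)) = diagonal w := by
  have hexp : ∀ i, ‖Complex.exp (w i) - 1‖ < 1 := fun i =>
    (Complex.norm_exp_sub_one_le (by linarith [hw i])).trans_lt (by linarith [hw i])
  rw [mexp_eq_exp, exp_diagonal, Pi.exp_def, ← Complex.exp_eq_exp_ℂ, mlog_diagonal hexp]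
  simp only [Complex.log_exp_of_norm_lt_pi ((hw _).trans (by linarith [Real.pi_gt_three]))]

theorem map_mexp (φ : Matrix (Fin N) (Fin N) ℂ ≃ₐ[ℂ] Matrix (Fin N) (Fin N) ℂ)
    (X : Matrix (Fin N) (Fin N) ℂ) : φ (mexp X) = mexp (φ X) := by
  simpa [mexp] using φ.toLinearEquiv.toContinuousLinearEquiv.map_tsum
    (f := fun k : ℕ => ((k.factorial : ℂ))⁻¹ • X ^ k)

theorem norm_mexp_sub_one_le_one_third {X : Matrix (Fin N) (Fin N) ℂ} (hX : ‖X‖ ≤ 1 / 4) :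
    ‖mexp X - 1‖ ≤ 1 / 3 := by
  have hexp := Real.exp_bound_div_one_sub_of_interval' (x := 1 / 4) (by norm_num) (by norm_num)
  calc ‖mexp X - 1‖ ≤ Real.exp ‖X‖ - 1 := mexp_eq_exp X ▸ norm_exp_sub_one_le X
    _ ≤ Real.exp (1 / 4) - 1 := by gcongr
    _ ≤ 1 / 3 := by norm_num at hexp ⊢; linarith

theorem mlog_mexp_smul_of_isHermitian {H : Matrix (Fin N) (Fin N) ℂ} (hH : H.IsHermitian) {c : ℂ}
    (hc : ‖c • H‖ < 1 / 2) : mlog (mexp (c • H)) = c • H := by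
  set u := hH.eigenvectorUnitary
  set w : Fin N → ℂ := c • (RCLike.ofReal ∘ hH.eigenvalues)
  have hcH : c • H = Unitary.conjStarAlgAut ℂ _ u (diagonal w) := by
    conv_lhs => rw [hH.spectral_theorem]
    rw [← map_smul, diagonal_smul]
  have hw : ∀ i, ‖w i‖ < 1 / 2 := fun i =>
    calc ‖w i‖ ≤ ‖diagonal w‖ := (l2_opNorm_diagonal w).symm ▸ norm_le_pi_norm w i
      _ = ‖c • H‖ := by
        rw [hcH, Unitary.conjStarAlgAut_apply, ← Unitary.coe_star, CStarRing.norm_mul_coe_unitary,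
          CStarRing.norm_coe_unitary_mul]
      _ < 1 / 2 := hc
  rw [hcH]
  have := map_mlog (Unitary.conjStarAlgAut ℂ _ u).toAlgEquiv (mexp (diagonal w))
  rw [map_mexp, mlog_mexp_diagonal hw] at this
  exact this.symm

end Matrix

theorem effective_hamiltonian_error_general {N : ℕ}
    (H : Matrix (Fin N) (Fin N) ℂ) (hH : H.IsHermitian)
    (t ε : ℝ) (ht : 0 < t) (htH : t * specNorm H ≤ 1 / 4) (hε : 0 ≤ ε)
    (Ut : Matrix (Fin N) (Fin N) ℂ)
    (hclose : specNorm (Ut - mexp ((-(Complex.I * (t : ℂ))) • H)) ≤ t * ε / 9)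
    (hsmall : t * ε / 9 ≤ 1 / 3) :
    specNorm ((Complex.I / (t : ℂ)) • mlog Ut - H) ≤ ε := by
  set c : ℂ := -(Complex.I * t)
  set E := mexp (c • H)
  rw [specNorm_eq_norm] at htH hclose ⊢
  have hcH : ‖c • H‖ ≤ 1 / 4 := by
    rwa [norm_smul, norm_neg, norm_mul, Complex.norm_I, one_mul, Complex.norm_real,
      Real.norm_of_nonneg ht.le]
  have hE : ‖E - 1‖ ≤ 1 / 3 := norm_mexp_sub_one_le_one_third hcH
  have hU : ‖Ut - 1‖ ≤ 2 / 3 := by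
    linarith [norm_sub_le_norm_sub_add_norm_sub Ut E 1]
  have hlog : mlog E = c • H := mlog_mexp_smul_of_isHermitian hH (by linarith)
  have hIc : (Complex.I / t) • c • H = H := by
    have ht' : (t : ℂ) ≠ 0 := by exact_mod_cast ht.ne'
    rw [smul_smul, div_mul_eq_mul_div, mul_neg, ← mul_assoc, Complex.I_mul_I, neg_one_mul, neg_neg,
      div_self ht', one_smul]
  calc ‖(Complex.I / t) • mlog Ut - H‖ = ‖(Complex.I / t) • (mlog Ut - mlog E)‖ := by
        rw [smul_sub, hlog, hIc]
    _ = ‖mlog Ut - mlog E‖ / t := by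
        rw [norm_smul, norm_div, Complex.norm_I, Complex.norm_real, Real.norm_of_nonneg ht.le,
          one_div_mul_eq_div]
    _ ≤ ‖Ut - E‖ / (1 - 2 / 3) / t := by
        gcongr
        exact norm_mlog_sub_mlog_le hU (hE.trans (by norm_num)) (by norm_num)
    _ ≤ t * ε / 9 / (1 - 2 / 3) / t := by gcongr
    _ ≤ ε := by field_simp; linarith

/-- **Error bound on the effective Hamiltonian.**  Let `H` be Hermitian, `U = e^{-iHt}` with
`0 < t` and `t ‖H‖ ≤ 1/4`, and let `Ut` be unitary with `‖Ut - U‖ ≤ tε/9 ≤ 1/3`.  Then the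
effective Hamiltonian `H̃ = (i/t) log Ut` satisfies `‖H̃ - H‖ ≤ ε`. -/
theorem effective_hamiltonian_error {N : ℕ}
    (H : Matrix (Fin N) (Fin N) ℂ) (hH : H.IsHermitian)
    (t ε : ℝ) (ht : 0 < t) (htH : t * specNorm H ≤ 1 / 4) (hε : 0 ≤ ε)
    (Ut : Matrix (Fin N) (Fin N) ℂ) (hUt : Utᴴ * Ut = 1)
    (hclose : specNorm (Ut - mexp ((-(Complex.I * (t : ℂ))) • H)) ≤ t * ε / 9)
    (hsmall : t * ε / 9 ≤ 1 / 3) :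
    specNorm ((Complex.I / (t : ℂ)) • mlog Ut - H) ≤ ε :=
  effective_hamiltonian_error_general H hH t ε ht htH hε Ut hclose hsmall
end

section
/- (Solution of the divide-and-conquer query recurrence, arithmetic core of the divide-and-conquer ground state preparation theorem.) Let p ≥ 1 be an integer, let r ∈ (0,1], let C₁ ≥ 1, and let F : ℕ → ℝ → ℝ be any function satisfying: (i) F(p, δ) ≤ C₁ for all δ ∈ (0, 1/3]; and (ii) F(n−1, δ) ≤ (π²/(2r²))·log₂(3/δ)·F(n, δ/3) for all integers n with 1 ≤ n ≤ p and all δ ∈ (0, 1/3]. Then for every δ ∈ (0, 1/3], F(0, δ) ≤ C₁ · 2^{p·(1 + log₂(π²/(4r²)) + log₂(log₂(1/δ)) + log₂(2p))}. -/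
/-- **Solution of the divide-and-conquer query recurrence.**  Let `p ≥ 1`, `r ∈ (0,1]`,
`C₁ ≥ 1`, and let `F : ℕ → ℝ → ℝ` satisfy (i) `F p δ ≤ C₁` for all `δ ∈ (0, 1/3]` and
(ii) `F (n-1) δ ≤ (π²/(2r²)) log₂(3/δ) F n (δ/3)` for all `1 ≤ n ≤ p` and `δ ∈ (0, 1/3]`.
Then `F 0 δ ≤ C₁ · 2^{p (1 + log₂(π²/(4r²)) + log₂ log₂ (1/δ) + log₂(2p))}` for every
`δ ∈ (0, 1/3]`. -/
theorem divide_and_conquer_recurrence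
    (p : ℕ) (hp : 1 ≤ p) (r : ℝ) (hr : r ∈ Set.Ioc (0 : ℝ) 1)
    (C₁ : ℝ) (hC₁ : 1 ≤ C₁) (F : ℕ → ℝ → ℝ)
    (hbase : ∀ δ ∈ Set.Ioc (0 : ℝ) (1 / 3), F p δ ≤ C₁)
    (hrec : ∀ n : ℕ, 1 ≤ n → n ≤ p → ∀ δ ∈ Set.Ioc (0 : ℝ) (1 / 3),
      F (n - 1) δ ≤ Real.pi ^ 2 / (2 * r ^ 2) * Real.logb 2 (3 / δ) * F n (δ / 3)) :
    ∀ δ ∈ Set.Ioc (0 : ℝ) (1 / 3),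
      F 0 δ ≤ C₁ * (2 : ℝ) ^ ((p : ℝ) *
        (1 + Real.logb 2 (Real.pi ^ 2 / (4 * r ^ 2)) +
          Real.logb 2 (Real.logb 2 (1 / δ)) + Real.logb 2 (2 * (p : ℝ)))) := by
  obtain ⟨hr0, hr1⟩ := hr
  have hπ : (0:ℝ) < Real.pi := Real.pi_pos
  set A : ℝ := Real.pi ^ 2 / (2 * r ^ 2) with hA
  have hApos : 0 < A := by positivity
  have hlog3 : 0 < Real.logb 2 3 := Real.logb_pos (by norm_num) (by norm_num)
  have hC₀ : (0:ℝ) ≤ C₁ := by linarith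
  -- key induction
  have key : ∀ k : ℕ, k ≤ p → ∀ δ ∈ Set.Ioc (0:ℝ) (1/3),
      F (p - k) δ ≤ C₁ * (A * ((k:ℝ) * Real.logb 2 3 + Real.logb 2 (1/δ)))^k := by
    intro k
    induction k with
    | zero => intro _ δ hδ; simpa using hbase δ hδ
    | succ k ih =>
      intro hk δ hδ
      obtain ⟨hδ0, hδ3⟩ := hδ
      have hδ3' : δ/3 ∈ Set.Ioc (0:ℝ) (1/3) := ⟨by positivity, by linarith⟩
      have h1 : 1 ≤ p - k := by omega
      have h2 : p - k ≤ p := by omega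
      have hrec' := hrec (p-k) h1 h2 δ ⟨hδ0, hδ3⟩
      have hIH := ih (by omega) (δ/3) hδ3'
      have hinv : (1:ℝ)/(δ/3) = 3/δ := by field_simp
      rw [hinv] at hIH
      have hlogδ : 0 < Real.logb 2 (3/δ) := Real.logb_pos (by norm_num)
        (by rw [lt_div_iff₀ hδ0]; linarith)
      have hL : 0 < Real.logb 2 (1/δ) := Real.logb_pos (by norm_num)
        (one_lt_one_div hδ0 (by linarith))
      have hlogsplit : Real.logb 2 (3/δ) = Real.logb 2 3 + Real.logb 2 (1/δ) := by
        rw [show (3:ℝ)/δ = 3 * (1/δ) by ring,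
          Real.logb_mul (by norm_num) (by positivity)]
      have hinner : (0:ℝ) ≤ A * (((k:ℕ)+1:ℝ) * Real.logb 2 3 + Real.logb 2 (1/δ)) :=
        mul_nonneg hApos.le (add_nonneg (mul_nonneg (by positivity) hlog3.le) hL.le)
      have hstep : p - (k+1) = (p - k) - 1 := by omega
      calc F (p - (k+1)) δ
          ≤ A * Real.logb 2 (3/δ) * F (p-k) (δ/3) := by rw [hstep]; exact hrec'
        _ ≤ A * Real.logb 2 (3/δ) *
            (C₁ * (A * ((k:ℝ) * Real.logb 2 3 + Real.logb 2 (3/δ)))^k) :=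
            mul_le_mul_of_nonneg_left hIH (by positivity)
        _ = A * Real.logb 2 (3/δ) *
            (C₁ * (A * (((k:ℕ)+1:ℝ) * Real.logb 2 3 + Real.logb 2 (1/δ)))^k) := by
            rw [hlogsplit]; ring_nf
        _ ≤ (A * (((k:ℕ)+1:ℝ) * Real.logb 2 3 + Real.logb 2 (1/δ))) *
            (C₁ * (A * (((k:ℕ)+1:ℝ) * Real.logb 2 3 + Real.logb 2 (1/δ)))^k) := by
            apply mul_le_mul_of_nonneg_right
            · rw [hlogsplit]
              have : (0:ℝ) ≤ (k:ℝ) * Real.logb 2 3 := by positivity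
              nlinarith
            · exact mul_nonneg hC₀ (pow_nonneg hinner k)
        _ = C₁ * (A * (((k:ℕ)+1:ℝ) * Real.logb 2 3 + Real.logb 2 (1/δ)))^(k+1) := by
            ring
        _ = C₁ * (A * (((k+1:ℕ):ℝ) * Real.logb 2 3 + Real.logb 2 (1/δ)))^(k+1) := by
            push_cast; ring
  intro δ hδ
  obtain ⟨hδ0, hδ3⟩ := hδ
  have hfin := key p le_rfl δ ⟨hδ0, hδ3⟩
  rw [Nat.sub_self] at hfin
  have hL : 0 < Real.logb 2 (1/δ) := Real.logb_pos (by norm_num)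
    (one_lt_one_div hδ0 (by linarith))
  have hlog3L : Real.logb 2 3 ≤ Real.logb 2 (1/δ) := by
    apply Real.logb_le_logb_of_le (by norm_num : (1:ℝ) < 2) (by norm_num)
    rw [le_div_iff₀ hδ0]; linarith
  have hp1 : (1:ℝ) ≤ (p:ℝ) := by exact_mod_cast hp
  set L : ℝ := Real.logb 2 (1/δ)
  have hmono : (A * ((p:ℝ) * Real.logb 2 3 + L))^p ≤ (A * (2 * (p:ℝ) * L))^p := by
    apply pow_le_pow_left₀
    · exact mul_nonneg hApos.le (add_nonneg (mul_nonneg (by positivity) hlog3.le) hL.le)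
    · apply mul_le_mul_of_nonneg_left _ hApos.le
      have h1 : (p:ℝ) * Real.logb 2 3 ≤ (p:ℝ) * L :=
        mul_le_mul_of_nonneg_left hlog3L (by positivity)
      have h2 : L ≤ (p:ℝ) * L := le_mul_of_one_le_left hL.le hp1
      linarith
  have hRHS : (2 : ℝ) ^ ((p : ℝ) *
      (1 + Real.logb 2 (Real.pi ^ 2 / (4 * r ^ 2)) +
        Real.logb 2 L + Real.logb 2 (2 * (p : ℝ)))) = (A * (2 * (p:ℝ) * L))^p := by
    rw [mul_comm ((p:ℝ)), Real.rpow_mul (by norm_num), Real.rpow_natCast]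
    congr 1
    rw [Real.rpow_add (by norm_num), Real.rpow_add (by norm_num),
      Real.rpow_add (by norm_num), Real.rpow_one,
      Real.rpow_logb (by norm_num) (by norm_num) (by positivity),
      Real.rpow_logb (by norm_num) (by norm_num) hL,
      Real.rpow_logb (by norm_num) (by norm_num) (by positivity)]
    rw [hA]
    field_simp
    ring
  rw [hRHS]
  calc F 0 δ ≤ C₁ * (A * ((p:ℝ) * Real.logb 2 3 + L))^p := hfin
    _ ≤ C₁ * (A * (2 * (p:ℝ) * L))^p := mul_le_mul_of_nonneg_left hmono hC₀
end
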